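/- If G is a connected graph of order n ≥ 3 with p pendant vertices and q quasi-pendant vertices, then the adjacency matrix A(G) has at least p eigenvalues in [0, Δ(G)] and at least p eigenvalues in [−√(⌈n/2⌉⌊n/2⌋), 0], counted with multiplicity. -/

import Mathlib

lemma adjMatrix_isHermitian {n : ℕ} (G : SimpleGraph (Fin n)) [DecidableRel G.Adj] :
    (G.adjMatrix ℝ).IsHermitian := by
  apply Matrix.IsHermitian.ext
  intro i j
  simp [SimpleGraph.adj_comm]

/-!
Pendant vertices of a connected graph on at least three vertices are pairwise non-adjacent, so the
quadratic form of `A(G)` vanishes on the coordinate subspace they span. By Sylvester's law of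
inertia such an isotropic subspace has dimension at most the number of nonnegative eigenvalues and
at most the number of nonpositive ones. It remains to see that every eigenvalue lies in
`[-√(⌈n/2⌉⌊n/2⌋), Δ]`; both bounds are Rayleigh-quotient estimates. The upper one comes from
`A = D - L` with the Laplacian `L` positive semidefinite. For the lower one, splitting `x = x⁺ - x⁻`
gives `xᵀAx ≥ -2 (∑ x⁺)(∑ x⁻)`, and Cauchy–Schwarz on the disjoint supports of `x⁺` and `x⁻`
bounds `2 (∑ x⁺)(∑ x⁻)` by `√(pq) ‖x‖²` with `p + q ≤ n`.
-/

open Finset Matrix QuadraticMap QuadraticForm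

theorem Nat.mul_le_succ_div_two_mul_div_two {p q n : ℕ} (h : p + q ≤ n) :
    p * q ≤ (n + 1) / 2 * (n / 2) := by
  have hsq : 4 * (p * q) ≤ n * n := by nlinarith [sq_nonneg ((p : ℤ) - q)]
  have : 4 * (p * q) ≤ 4 * ((n + 1) / 2 * (n / 2)) + 1 := by
    rcases Nat.even_or_odd' n with ⟨k, rfl | rfl⟩
    · rw [show (2 * k + 1) / 2 = k by omega, show 2 * k / 2 = k by omega]; nlinarith
    · rw [show (2 * k + 1 + 1) / 2 = k + 1 by omega, show (2 * k + 1) / 2 = k by omega]; nlinarith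
  omega

theorem two_mul_le_sqrt_mul_add {a b s t M : ℝ} {p q : ℕ} (ha : a ^ 2 ≤ p * s)
    (hb : b ^ 2 ≤ q * t) (hs : 0 ≤ s) (ht : 0 ≤ t) (hpq : p * q ≤ M) :
    2 * (a * b) ≤ √M * (s + t) := by
  rw [← Real.sqrt_sq (add_nonneg hs ht), ← Real.sqrt_mul' _ (sq_nonneg _)]
  apply Real.le_sqrt_of_sq_le
  have hst : 4 * (s * t) ≤ (s + t) ^ 2 := by nlinarith [sq_nonneg (s - t)]
  calc (2 * (a * b)) ^ 2 = 4 * (a ^ 2 * b ^ 2) := by ring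
    _ ≤ 4 * ((p * s) * (q * t)) := by gcongr
    _ = (p * q) * (4 * (s * t)) := by ring
    _ ≤ M * (s + t) ^ 2 := by gcongr; exact (by positivity : (0 : ℝ) ≤ p * q).trans hpq

theorem neg_posPart_mul_negPart_add_le_mul {a u v : ℝ} (ha₀ : 0 ≤ a) (ha₁ : a ≤ 1) :
    -(u⁺ * v⁻ + u⁻ * v⁺) ≤ a * (u * v) := by
  rcases le_total 0 u with hu | hu <;> rcases le_total 0 v with hv | hv <;>
    simp only [posPart_eq_self.2, posPart_eq_zero.2, negPart_eq_neg.2, negPart_eq_zero.2, hu, hv]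
  · nlinarith [mul_nonneg hu hv]
  · nlinarith [mul_nonpos_of_nonneg_of_nonpos hu hv]
  · nlinarith [mul_nonpos_of_nonpos_of_nonneg hu hv]
  · nlinarith [mul_nonneg_of_nonpos_of_nonpos hu hv]

section Vectors

variable {ι : Type*} [Fintype ι]

theorem sq_sum_le_card_support_mul_sum_sq (f : ι → ℝ) :
    (∑ i, f i) ^ 2 ≤ #{i | f i ≠ 0} * ∑ i, f i ^ 2 := by
  rw [← sum_filter_ne_zero]
  exact (sq_sum_le_card_mul_sum_sq ..).trans <| by gcongr; exact subset_univ _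

theorem two_mul_sum_posPart_mul_sum_negPart_le (x : ι → ℝ) :
    2 * ((∑ i, (x i)⁺) * ∑ i, (x i)⁻) ≤
      √(((Fintype.card ι + 1) / 2 : ℕ) * ((Fintype.card ι / 2 : ℕ) : ℝ)) * (x ⬝ᵥ x) := by
  classical
  have hsupp : #{i | (x i)⁺ ≠ 0} + #{i | (x i)⁻ ≠ 0} ≤ Fintype.card ι := by
    rw [← card_union_of_disjoint]
    · exact card_le_univ _
    · refine disjoint_filter.2 fun i _ hpos => not_not.2 (negPart_eq_zero.2 ?_)
      exact (lt_of_not_ge (mt posPart_eq_zero.2 hpos)).le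
  have hsq : x ⬝ᵥ x = ∑ i, (x i)⁺ ^ 2 + ∑ i, (x i)⁻ ^ 2 := by
    rw [← sum_add_distrib, dotProduct]
    refine sum_congr rfl fun i _ => ?_
    rcases le_total 0 (x i) with h | h
    · rw [posPart_eq_self.2 h, negPart_eq_zero.2 h]; ring
    · rw [posPart_eq_zero.2 h, negPart_eq_neg.2 h]; ring
  rw [hsq]
  refine two_mul_le_sqrt_mul_add (sq_sum_le_card_support_mul_sum_sq _)
    (sq_sum_le_card_support_mul_sum_sq _) (by positivity) (by positivity) ?_
  exact_mod_cast Nat.mul_le_succ_div_two_mul_div_two hsupp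

theorem Matrix.neg_two_mul_sum_posPart_mul_sum_negPart_le_dotProduct_mulVec
    {A : Matrix ι ι ℝ} (h₀ : ∀ i j, 0 ≤ A i j) (h₁ : ∀ i j, A i j ≤ 1) (x : ι → ℝ) :
    -(2 * ((∑ i, (x i)⁺) * ∑ i, (x i)⁻)) ≤ x ⬝ᵥ A *ᵥ x :=
  calc -(2 * ((∑ i, (x i)⁺) * ∑ i, (x i)⁻))
      = ∑ i, ∑ j, -((x i)⁺ * (x j)⁻ + (x i)⁻ * (x j)⁺) := by
        simp only [sum_neg_distrib, sum_add_distrib, ← mul_sum, ← sum_mul]; ring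
    _ ≤ ∑ i, ∑ j, x i * (A i j * x j) := sum_le_sum fun i _ => sum_le_sum fun j _ => by
        rw [mul_left_comm (x i)]; exact neg_posPart_mul_negPart_add_le_mul (h₀ i j) (h₁ i j)
    _ = x ⬝ᵥ A *ᵥ x := by simp only [dotProduct, mulVec, mul_sum]

end Vectors

theorem Matrix.toQuadraticForm'_apply {R ι : Type*} [CommRing R] [Fintype ι] [DecidableEq ι]
    (A : Matrix ι ι R) (x : ι → R) : A.toQuadraticForm' x = x ⬝ᵥ A *ᵥ x := by
  rw [toQuadraticForm', LinearMap.BilinMap.toQuadraticMap_apply, toLinearMap₂'_apply']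

theorem Matrix.toQuadraticForm'_apply_eq_zero {R ι : Type*} [CommRing R] [Fintype ι]
    [DecidableEq ι] {A : Matrix ι ι R} {S : Set ι} (hS : ∀ i ∈ S, ∀ j ∈ S, A i j = 0)
    {x : ι → R} (hx : x ∈ Pi.spanSubset R S) : A.toQuadraticForm' x = 0 := by
  rw [Pi.mem_spanSubset_iff] at hx
  rw [toQuadraticForm'_apply, dotProduct]
  refine sum_eq_zero fun i _ => ?_
  rw [mulVec, dotProduct, mul_sum]
  refine sum_eq_zero fun j _ => ?_
  by_cases hi : i ∈ S
  · by_cases hj : j ∈ S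
    · simp [hS i hi j hj]
    · simp [hx j hj]
  · simp [hx i hi]

namespace Matrix.IsHermitian

variable {ι : Type*} [Fintype ι] [DecidableEq ι] {A : Matrix ι ι ℝ}

theorem equivalent_weightedSumSquares (hA : A.IsHermitian) :
    A.toQuadraticForm'.Equivalent (weightedSumSquares ℝ hA.eigenvalues) := by
  set U : Matrix ι ι ℝ := (hA.eigenvectorUnitary : Matrix ι ι ℝ)
  have hdiag : Uᵀ * A * U = diagonal hA.eigenvalues := by
    simpa [U, star_eq_conjTranspose] using hA.conjStarAlgAut_star_eigenvectorUnitary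
  refine .symm ⟨⟨UnitaryGroup.toLinearEquiv hA.eigenvectorUnitary, fun c => ?_⟩⟩
  change A.toQuadraticForm' (U *ᵥ c) = weightedSumSquares ℝ hA.eigenvalues c
  calc A.toQuadraticForm' (U *ᵥ c) = c ⬝ᵥ (Uᵀ * A * U) *ᵥ c := by
        rw [toQuadraticForm'_apply, ← mulVec_mulVec, ← mulVec_mulVec, dotProduct_mulVec c,
          vecMul_transpose]
    _ = weightedSumSquares ℝ hA.eigenvalues c := by
        simp [hdiag, dotProduct, mulVec_diagonal, mul_left_comm]

theorem card_le_card_nonneg_eigenvalues (hA : A.IsHermitian) {S : Finset ι}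
    (hS : ∀ i ∈ S, ∀ j ∈ S, A i j = 0) :
    #S ≤ #{i | 0 ≤ hA.eigenvalues i} := by
  have h := sigPos_add_finrank_le_of_nonpos (Q := -A.toQuadraticForm')
    (V := Pi.spanSubset ℝ (S : Set ι)) fun x hx => by simp [toQuadraticForm'_apply_eq_zero hS hx]
  rw [sigPos_neg, sigNeg_of_equiv_weightedSumSquares hA.equivalent_weightedSumSquares,
    Pi.dim_spanSubset, Set.ncard_coe_finset, Set.ncard_eq_toFinset_card', Set.toFinset_ofPred,
    Module.finrank_fintype_fun_eq_card] at h
  have := card_filter_add_card_filter_not (s := univ) fun i => 0 ≤ hA.eigenvalues i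
  simp only [not_le, card_univ] at this
  omega

theorem card_le_card_nonpos_eigenvalues (hA : A.IsHermitian) {S : Finset ι}
    (hS : ∀ i ∈ S, ∀ j ∈ S, A i j = 0) :
    #S ≤ #{i | hA.eigenvalues i ≤ 0} := by
  have h := sigPos_add_finrank_le_of_nonpos (Q := A.toQuadraticForm')
    (V := Pi.spanSubset ℝ (S : Set ι)) fun x hx => (toQuadraticForm'_apply_eq_zero hS hx).le
  rw [sigPos_of_equiv_weightedSumSquares hA.equivalent_weightedSumSquares,
    Pi.dim_spanSubset, Set.ncard_coe_finset, Set.ncard_eq_toFinset_card', Set.toFinset_ofPred,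
    Module.finrank_fintype_fun_eq_card] at h
  have := card_filter_add_card_filter_not (s := univ) fun i => hA.eigenvalues i ≤ 0
  simp only [not_le, card_univ] at this
  omega

theorem dotProduct_eigenvectorBasis_self (hA : A.IsHermitian) (i : ι) :
    ⇑(hA.eigenvectorBasis i) ⬝ᵥ ⇑(hA.eigenvectorBasis i) = 1 := by
  have := real_inner_self_eq_norm_sq (hA.eigenvectorBasis i)
  rw [hA.eigenvectorBasis.orthonormal.1 i, EuclideanSpace.inner_eq_star_dotProduct] at this
  simpa using this

theorem eigenvalues_eq_dotProduct (hA : A.IsHermitian) (i : ι) :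
    hA.eigenvalues i = ⇑(hA.eigenvectorBasis i) ⬝ᵥ A *ᵥ ⇑(hA.eigenvectorBasis i) := by
  rw [mulVec_eigenvectorBasis, dotProduct_smul, dotProduct_eigenvectorBasis_self, smul_eq_mul,
    mul_one]

theorem le_eigenvalues_of_forall_le_dotProduct_mulVec (hA : A.IsHermitian) {c : ℝ}
    (h : ∀ x, c * (x ⬝ᵥ x) ≤ x ⬝ᵥ A *ᵥ x) (i : ι) : c ≤ hA.eigenvalues i := by
  simpa [dotProduct_eigenvectorBasis_self, ← eigenvalues_eq_dotProduct] using
    h (hA.eigenvectorBasis i)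

theorem eigenvalues_le_of_forall_dotProduct_mulVec_le (hA : A.IsHermitian) {c : ℝ}
    (h : ∀ x, x ⬝ᵥ A *ᵥ x ≤ c * (x ⬝ᵥ x)) (i : ι) : hA.eigenvalues i ≤ c := by
  simpa [dotProduct_eigenvectorBasis_self, ← eigenvalues_eq_dotProduct] using
    h (hA.eigenvectorBasis i)

end Matrix.IsHermitian

namespace SimpleGraph

variable {V : Type*} [Fintype V] {G : SimpleGraph V} [DecidableRel G.Adj]

theorem Connected.not_adj_of_degree_eq_one (hG : G.Connected) (hV : 3 ≤ Fintype.card V)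
    {u v : V} (hu : G.degree u = 1) (hv : G.degree v = 1) : ¬G.Adj u v := by
  classical
  intro huv
  have hunique : ∀ {a b c}, G.degree a = 1 → G.Adj a b → G.Adj a c → c = b := fun ha hab hac =>
    (degree_eq_one_iff_existsUnique_adj.1 ha).unique hac hab
  obtain ⟨w, -, hw⟩ := exists_mem_notMem_of_card_lt_card (s := {u, v}) (t := univ)
    (by rw [card_univ]; exact (card_le_two).trans_lt (by omega))
  obtain ⟨p⟩ := hG.preconnected u w
  obtain ⟨d, -, hd₁, hd₂⟩ := p.exists_boundary_dart {u, v} (by simp) (by simpa using hw)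
  rcases hd₁ with h | h
  · exact hd₂ (Or.inr (hunique hu (h ▸ huv) (h ▸ d.adj)))
  · exact hd₂ (Or.inl (hunique hv (h ▸ huv.symm) (h ▸ d.adj)))

theorem dotProduct_adjMatrix_mulVec_le_maxDegree_mul [DecidableEq V] (x : V → ℝ) :
    x ⬝ᵥ G.adjMatrix ℝ *ᵥ x ≤ G.maxDegree * (x ⬝ᵥ x) := by
  have hL := (G.posSemidef_lapMatrix ℝ).dotProduct_mulVec_nonneg x
  rw [star_trivial] at hL
  calc x ⬝ᵥ G.adjMatrix ℝ *ᵥ x = x ⬝ᵥ G.degMatrix ℝ *ᵥ x - x ⬝ᵥ G.lapMatrix ℝ *ᵥ x := by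
        rw [lapMatrix, sub_mulVec, dotProduct_sub, sub_sub_cancel]
    _ ≤ ∑ i, G.degree i * x i * x i := by rw [dotProduct_mulVec_degMatrix]; linarith
    _ ≤ ∑ i, G.maxDegree * x i * x i := sum_le_sum fun i _ => by
        rw [mul_assoc, mul_assoc]
        gcongr
        · exact mul_self_nonneg _
        · exact_mod_cast G.degree_le_maxDegree i
    _ = G.maxDegree * (x ⬝ᵥ x) := by simp only [dotProduct, mul_sum, mul_assoc]

theorem neg_sqrt_mul_le_dotProduct_adjMatrix_mulVec (x : V → ℝ) :
    -√(((Fintype.card V + 1) / 2 : ℕ) * ((Fintype.card V / 2 : ℕ) : ℝ)) * (x ⬝ᵥ x) ≤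
      x ⬝ᵥ G.adjMatrix ℝ *ᵥ x := by
  have hA := neg_two_mul_sum_posPart_mul_sum_negPart_le_dotProduct_mulVec
    (A := G.adjMatrix ℝ) (fun i j => by by_cases h : G.Adj i j <;> simp [h])
    (fun i j => by by_cases h : G.Adj i j <;> simp [h]) x
  linarith [two_mul_sum_posPart_mul_sum_negPart_le x]

end SimpleGraph

open Finset in
theorem adjacency_pendant_eigenvalue_count (n : ℕ) (hn : 3 ≤ n)
    (G : SimpleGraph (Fin n)) [DecidableRel G.Adj] (hconn : G.Connected) :
    (univ.filter fun v : Fin n => G.degree v = 1).card ≤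
      (univ.filter fun i : Fin n =>
        0 ≤ (adjMatrix_isHermitian G).eigenvalues i ∧
        (adjMatrix_isHermitian G).eigenvalues i ≤ (G.maxDegree : ℝ)).card ∧
    (univ.filter fun v : Fin n => G.degree v = 1).card ≤
      (univ.filter fun i : Fin n =>
        -Real.sqrt (((n + 1) / 2 : ℕ) * ((n / 2 : ℕ) : ℝ)) ≤
          (adjMatrix_isHermitian G).eigenvalues i ∧
        (adjMatrix_isHermitian G).eigenvalues i ≤ 0).card := by
  have hA := adjMatrix_isHermitian G
  have hpendant : ∀ i ∈ ({v | G.degree v = 1} : Finset (Fin n)),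
      ∀ j ∈ ({v | G.degree v = 1} : Finset (Fin n)), G.adjMatrix ℝ i j = 0 := by
    simp only [mem_filter, mem_univ, true_and]
    intro i hi j hj
    simp [hconn.not_adj_of_degree_eq_one (by simpa using hn) hi hj]
  have hupper := hA.eigenvalues_le_of_forall_dotProduct_mulVec_le
    G.dotProduct_adjMatrix_mulVec_le_maxDegree_mul
  have hlower := hA.le_eigenvalues_of_forall_le_dotProduct_mulVec
    G.neg_sqrt_mul_le_dotProduct_adjMatrix_mulVec
  rw [Fintype.card_fin] at hlower
  exact ⟨by simpa only [hupper, and_true] using hA.card_le_card_nonneg_eigenvalues hpendant,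
    by simpa only [hlower, true_and] using hA.card_le_card_nonpos_eigenvalues hpendant⟩
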